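/- arXiv:1309.4030 — 2 statements merged into one kernel-verified Lean document; each statement's English description precedes it below -/
import Mathlib

section
/- Suppose x, y, z are coprime integers with x^7 + y^7 = z^l for a prime l not equal to 2, 3, or 7, with z ≠ 0 and 7 dividing z. Then there exist nonzero coprime integers z_1, z_2 with 7(x + y) = z_1^l, H_7(x,y) = 7 z_2^l, and z = z_1 z_2, where H_7(x,y) = x^6 - x^5 y + x^4 y^2 - x^3 y^3 + x^2 y^4 - x y^5 + y^6. -/
/-!
Since `7 ∣ z`, Fermat's little theorem gives `7 ∣ x + y`. Writing `t = x + y`, the binomial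
expansion of `((t - y) ^ 7 + y ^ 7) / t` shows `H₇(x, y) = 7 * B` with `B ≡ y ^ 6 (mod t)`, so
`B` is coprime to `t` (because `t` is coprime to `y`) and hence to `7 * t`. The coprime factors
of `(7 * t) * B = z ^ l` are then `l`-th powers, `l` being odd.
-/

def H7 {R : Type*} [CommRing R] (x y : R) : R :=
  x ^ 6 - x ^ 5 * y + x ^ 4 * y ^ 2 - x ^ 3 * y ^ 3 + x ^ 2 * y ^ 4 - x * y ^ 5 + y ^ 6

section H7

variable {R : Type*} [CommRing R]

theorem add_mul_H7 (x y : R) : (x + y) * H7 x y = x ^ 7 + y ^ 7 := by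
  unfold H7; ring

theorem exists_H7_eq_seven_mul {x y : R} (h : (7 : R) ∣ x + y) :
    ∃ q : R, H7 x y = 7 * (y ^ 6 + (x + y) * q) := by
  obtain ⟨c, hc⟩ := h
  set t := x + y
  -- `H7 x y = 7 * (y ^ 6 + t * P) + t ^ 6` with `t ^ 6 = 7 * t * (c * t ^ 4)`
  refine ⟨-3 * y ^ 5 + 5 * y ^ 4 * t - 5 * y ^ 3 * t ^ 2 + 3 * y ^ 2 * t ^ 3 - y * t ^ 4
    + c * t ^ 4, ?_⟩
  have hx : x = t - y := by ring
  rw [hx]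
  unfold H7
  linear_combination t ^ 5 * hc

end H7

theorem Int.dvd_add_of_dvd_pow_add {p : ℕ} (hp : p.Prime) {x y : ℤ}
    (h : (p : ℤ) ∣ x ^ p + y ^ p) : (p : ℤ) ∣ x + y := by
  have := Fact.mk hp
  rw [← ZMod.intCast_zmod_eq_zero_iff_dvd] at h ⊢
  push_cast at h ⊢
  rwa [ZMod.pow_card, ZMod.pow_card] at h

theorem factorization_77l_case_II_general (l : ℕ) (hl : l.Prime) (hl2 : l ≠ 2)
    (x y z : ℤ) (hxy : IsCoprime x y) (heq : x ^ 7 + y ^ 7 = z ^ l)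
    (hz : z ≠ 0) (h7 : (7 : ℤ) ∣ z) :
    ∃ z₁ z₂ : ℤ, z₁ ≠ 0 ∧ z₂ ≠ 0 ∧ IsCoprime z₁ z₂ ∧
      7 * (x + y) = z₁ ^ l ∧
      x ^ 6 - x ^ 5 * y + x ^ 4 * y ^ 2 - x ^ 3 * y ^ 3 + x ^ 2 * y ^ 4 - x * y ^ 5 + y ^ 6
        = 7 * z₂ ^ l ∧
      z = z₁ * z₂ := by
  have hodd : Odd l := hl.odd_of_ne_two hl2
  have h7xy : (7 : ℤ) ∣ x + y :=
    Int.dvd_add_of_dvd_pow_add (p := 7) (by norm_num) (heq ▸ dvd_pow h7 hl.ne_zero)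
  obtain ⟨q, hq⟩ := exists_H7_eq_seven_mul h7xy
  have hty : IsCoprime (x + y) y := by simpa using hxy.add_mul_left_left 1
  have htB : IsCoprime (x + y) (y ^ 6 + (x + y) * q) := hty.pow_right.add_mul_left_right q
  have hcop : IsCoprime (7 * (x + y)) (y ^ 6 + (x + y) * q) :=
    (htB.of_isCoprime_of_dvd_left h7xy).mul_left htB
  have hprod : 7 * (x + y) * (y ^ 6 + (x + y) * q) = z ^ l := by
    rw [← heq, ← add_mul_H7, hq]; ring
  obtain ⟨⟨z₁, hz₁⟩, ⟨z₂, hz₂⟩⟩ := Int.eq_pow_of_mul_eq_pow_odd hcop hodd hprod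
  have hz₁₂ : z = z₁ * z₂ :=
    (hodd.strictMono_pow.injective (by rw [mul_pow, ← hz₁, ← hz₂, hprod])).symm
  obtain ⟨hz₁0, hz₂0⟩ := mul_ne_zero_iff.mp (hz₁₂ ▸ hz)
  refine ⟨z₁, z₂, hz₁0, hz₂0, (IsCoprime.pow_iff hl.pos hl.pos).mp (hz₁ ▸ hz₂ ▸ hcop), hz₁,
    hq.trans (by rw [hz₂]), hz₁₂⟩

theorem factorization_77l_case_II (l : ℕ) (hl : l.Prime) (hl2 : l ≠ 2) (hl3 : l ≠ 3) (hl7 : l ≠ 7)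
    (x y z : ℤ) (hxy : IsCoprime x y) (heq : x ^ 7 + y ^ 7 = z ^ l)
    (hz : z ≠ 0) (h7 : (7 : ℤ) ∣ z) :
    ∃ z₁ z₂ : ℤ, z₁ ≠ 0 ∧ z₂ ≠ 0 ∧ IsCoprime z₁ z₂ ∧
      7 * (x + y) = z₁ ^ l ∧
      x ^ 6 - x ^ 5 * y + x ^ 4 * y ^ 2 - x ^ 3 * y ^ 3 + x ^ 2 * y ^ 4 - x * y ^ 5 + y ^ 6
        = 7 * z₂ ^ l ∧
      z = z₁ * z₂ :=
  factorization_77l_case_II_general l hl hl2 x y z hxy heq hz h7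
end

section
/- Let θ be a root of t^3 + t^2 - 2t - 1. The only integer solutions (x, y) to x^2 + θxy + y^2 = ±(2 - θ) with x, y ∈ ℤ are (x, y) = (1, -1) and (x, y) = (-1, 1). -/
/-!
θ is an algebraic integer, and the cubic t³ + t² - 2t - 1 takes only odd values on ℤ, so θ is
irrational. Hence 1 and θ are linearly independent over ℚ, and comparing coefficients in
x² + y² + xy·θ = ±2 ∓ θ gives x² + y² = ±2 and xy = ∓1: the sign - is impossible, and the
sign + forces (x + y)² = 0 and x² = 1.
-/

open Polynomial

lemma int_cubic_ne_zero (k : ℤ) : k ^ 3 + k ^ 2 - 2 * k - 1 ≠ 0 := by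
  intro hk
  have hk₂ := congrArg (Int.cast : ℤ → ZMod 2) hk
  push_cast at hk₂
  generalize (k : ZMod 2) = r at hk₂
  revert r
  decide

lemma irrational_of_cubic_eq_zero {θ : ℝ} (hθ : θ ^ 3 + θ ^ 2 - 2 * θ - 1 = 0) :
    Irrational θ := by
  have hint : IsIntegral ℤ θ := by
    refine ⟨X ^ 3 + X ^ 2 - 2 * X - 1, by monicity!, ?_⟩
    simpa [eval₂_sub, eval₂_add] using hθ
  rintro ⟨q, rfl⟩
  obtain ⟨k, hk⟩ := (hint.exists_int_iff_exists_rat).mp ⟨q, rfl⟩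
  rw [hk] at hθ
  exact int_cubic_ne_zero k (by exact_mod_cast hθ)

lemma Irrational.eq_zero_of_intCast_add_intCast_mul_eq_zero {θ : ℝ} (hθ : Irrational θ)
    {a b : ℤ} (h : (a : ℝ) + b * θ = 0) : a = 0 ∧ b = 0 := by
  obtain rfl : b = 0 := by
    by_contra hb
    exact ((hθ.intCast_mul hb).intCast_add a).ne_zero h
  simpa using h

theorem norm_form_eq_pm_two_sub_theta (θ : ℝ) (hθ : θ ^ 3 + θ ^ 2 - 2 * θ - 1 = 0)
    (x y : ℤ)
    (h : (x : ℝ) ^ 2 + θ * x * y + y ^ 2 = 2 - θ ∨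
         (x : ℝ) ^ 2 + θ * x * y + y ^ 2 = -(2 - θ)) :
    (x = 1 ∧ y = -1) ∨ (x = -1 ∧ y = 1) := by
  have hirr := irrational_of_cubic_eq_zero hθ
  rcases h with h | h
  · obtain ⟨hsq, hmul⟩ := hirr.eq_zero_of_intCast_add_intCast_mul_eq_zero
      (a := x ^ 2 + y ^ 2 - 2) (b := x * y + 1) (by push_cast; linarith)
    obtain rfl : y = -x := by nlinarith [sq_nonneg (x + y)]
    have hx : x ^ 2 = 1 := by linarith
    rcases sq_eq_one_iff.mp hx with rfl | rfl <;> simp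
  · obtain ⟨hsq, -⟩ := hirr.eq_zero_of_intCast_add_intCast_mul_eq_zero
      (a := x ^ 2 + y ^ 2 + 2) (b := x * y - 1) (by push_cast; linarith)
    nlinarith [sq_nonneg x, sq_nonneg y]
end
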